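/- arXiv:0904.0240 — 3 statements merged into one kernel-verified Lean document; each statement's English description precedes it below -/
import Mathlib

section
/- Generalized lifting lemma: let N be a D-module, L_γ, L_β ≤ N submodules, γ̄ : M' → N/L_γ and β̄ : N' → N/L_β morphisms, and set L := L_γ + L_β with quotient maps π_γ : N/L_γ → N/L and π_β : N/L_β → N/L. Assume (im): img(π_γ ∘ γ̄) ≤ img(π_β ∘ β̄), and (eff): the preimage in N of img(γ̄) intersected with L equals L_γ. Then there exists a morphism ᾱ : M' → N'/L_α, where L_α := β̄^{-1}(L/L_β pulled back appropriately), i.e. L_α is the preimage under β̄ of the image of L in N/L_β, such that the induced square commutes: (π_β ∘ β̄ induced on N'/L_α) ∘ ᾱ = π_γ ∘ γ̄. Moreover such ᾱ with combined image equal to β̄^{-1}(image of π_γ∘γ̄) is unique. -/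
/-!
Since `L_α` is the kernel of `π_β ∘ β̄`, the map `β̄` induces an injection
`β̂ : N'/L_α → N/L`, and (im) says that `π_γ ∘ γ̄` lands in its range. A map into the
range of an injective linear map factors through it uniquely, and injectivity of `β̂`
also identifies the combined image of the factor with the pullback of `Img(π_γ ∘ γ̄)`.
-/

open LinearMap Function

namespace LinearMap

variable {R A B C : Type*} [Semiring R] [AddCommMonoid A] [Module R A]
  [AddCommMonoid B] [Module R B] [AddCommMonoid C] [Module R C]

theorem existsUnique_comp_eq_of_range_le {f : A →ₗ[R] B} (hf : Injective f) {g : C →ₗ[R] B}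
    (hg : range g ≤ range f) : ∃! h : C →ₗ[R] A, f ∘ₗ h = g := by
  let e : A ≃ₗ[R] range f := .ofInjective f hf
  have hfh :
      f ∘ₗ (e.symm.toLinearMap ∘ₗ g.codRestrict (range f) fun c => hg ⟨c, rfl⟩) = g := by
    ext c
    exact LinearEquiv.ofInjective_symm_apply f (h := hf) _
  exact ⟨_, hfh, fun h hh => (cancel_left hf).mp (hh.trans hfh.symm)⟩

end LinearMap

/-- The generalized lifting lemma: given generalized morphisms `γ = (γ̄, L_γ) : M' → N`
and `β = (β̄, L_β) : N' → N`, with common coarsening aid `L := L_γ + L_β`, satisfying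
(im) `Img γ̃ ≤ Img β̃` and (eff) `Img γ ∩ L = L_γ`, there is a lift
`ᾱ : M' → N'/L_α` with `L_α := β̄⁻¹(image of L in N/L_β)` making the square commute,
and the lift with combined image `β̄⁻¹(Img(π_γ∘γ̄))` is unique. -/
theorem generalized_lifting_lemma
    (D : Type*) [Ring D] (M' N' N : Type*)
    [AddCommGroup M'] [Module D M'] [AddCommGroup N'] [Module D N']
    [AddCommGroup N] [Module D N]
    (Lγ Lβ : Submodule D N)
    (γbar : M' →ₗ[D] N ⧸ Lγ) (βbar : N' →ₗ[D] N ⧸ Lβ) :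
    -- the common coarsening aid and the two projections
    let L : Submodule D N := Lγ ⊔ Lβ
    let πγ : (N ⧸ Lγ) →ₗ[D] N ⧸ L :=
      Submodule.mapQ Lγ L LinearMap.id (by intro x hx; exact Submodule.mem_sup_left hx)
    let πβ : (N ⧸ Lβ) →ₗ[D] N ⧸ L :=
      Submodule.mapQ Lβ L LinearMap.id (by intro x hx; exact Submodule.mem_sup_right hx)
    -- the aid of the lift
    let Lα : Submodule D N' := Submodule.comap βbar (Submodule.map Lβ.mkQ L)
    -- (im): the combined image of the coarsened β contains that of the coarsened γ
    LinearMap.range (πγ ∘ₗ γbar) ≤ LinearMap.range (πβ ∘ₗ βbar) →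
    -- (eff): the coarsening of γ is effective
    Submodule.comap Lγ.mkQ (LinearMap.range γbar) ⊓ L = Lγ →
    -- the induced map `N'/L_α → N/L` exists and the lift exists uniquely
    ∃ βhat : (N' ⧸ Lα) →ₗ[D] N ⧸ L,
      βhat ∘ₗ Lα.mkQ = πβ ∘ₗ βbar ∧
      ∃! αbar : M' →ₗ[D] N' ⧸ Lα,
        βhat ∘ₗ αbar = πγ ∘ₗ γbar ∧
        Submodule.comap Lα.mkQ (LinearMap.range αbar) =
          Submodule.comap βbar
            (Submodule.comap πβ (LinearMap.range (πγ ∘ₗ γbar))) := by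
  intro L πγ πβ Lα him _
  have hLα : Lα = ker (πβ ∘ₗ βbar) := by
    rw [ker_comp, Submodule.ker_mapQ, Submodule.comap_id]
  set βhat := Lα.liftQ (πβ ∘ₗ βbar) hLα.le
  have hβhat : βhat ∘ₗ Lα.mkQ = πβ ∘ₗ βbar := Lα.liftQ_mkQ _ _
  have hinj : Injective βhat := ker_eq_bot.mp (Lα.ker_liftQ_eq_bot _ _ hLα.ge)
  have hrange : range (πγ ∘ₗ γbar) ≤ range βhat := by rwa [Submodule.range_liftQ]
  obtain ⟨αbar, hαbar, huniq⟩ := existsUnique_comp_eq_of_range_le hinj hrange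
  refine ⟨βhat, hβhat, αbar, ⟨hαbar, ?_⟩, fun α' hα' => huniq α' hα'.1⟩
  rw [← Submodule.comap_comp, ← hβhat, Submodule.comap_comp, ← hαbar, range_comp,
    Submodule.comap_map_eq_of_injective hinj]
end

section
/- Let C be a chain complex of D-modules with a finite ascending filtration (F_pC) respected by the differential ∂. In each fixed degree, with A^∞_p := ker ∂ ∩ F_pC and L := ∂C + F_{p-1}C, one has (∂C + F_{p-1}C) ∩ (A^∞_p + F_{p-1}C) = (∂C ∩ F_pC) + F_{p-1}C. -/
/-!
Since `F_{p-1}C ≤ F_pC`, the modular law rewrites `A^∞_p + F_{p-1}C` as `(ker ∂ + F_{p-1}C) ∩ F_pC`.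
As `∂C ≤ ker ∂`, intersecting with `∂C + F_{p-1}C` leaves `(∂C + F_{p-1}C) ∩ F_pC`, and the modular
law once more turns this into `(∂C ∩ F_pC) + F_{p-1}C`.
-/

theorem sup_inf_inf_sup_eq_of_le {α : Type*} [Lattice α] [IsModularLattice α] {b k e q : α}
    (hbk : b ≤ k) (he : e ≤ q) : (b ⊔ e) ⊓ (k ⊓ q ⊔ e) = b ⊓ q ⊔ e := by
  calc (b ⊔ e) ⊓ (k ⊓ q ⊔ e)
      = (b ⊔ e) ⊓ ((e ⊔ k) ⊓ q) := by rw [sup_inf_assoc_of_le k he, sup_comm e]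
    _ = (e ⊔ b) ⊓ q := by
        rw [← inf_assoc, sup_comm b, inf_eq_left.mpr (sup_le_sup_left hbk e)]
    _ = b ⊓ q ⊔ e := by rw [sup_inf_assoc_of_le b he, sup_comm]

/-- `C1`, `C0`, `Cm1` are the components of `C` in degrees `n+1`, `n`, `n-1`. -/
theorem filtered_complex_effectiveness_general
    (D : Type*) [Ring D]
    (C1 C0 Cm1 : Type*) [AddCommGroup C1] [Module D C1]
    [AddCommGroup C0] [Module D C0] [AddCommGroup Cm1] [Module D Cm1]
    (d1 : C1 →ₗ[D] C0) (d0 : C0 →ₗ[D] Cm1)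
    (hdd : d0 ∘ₗ d1 = 0)
    (F0 : ℤ → Submodule D C0)
    (hF0 : Monotone F0)
    (p : ℤ) :
    (LinearMap.range d1 ⊔ F0 (p - 1)) ⊓ ((LinearMap.ker d0 ⊓ F0 p) ⊔ F0 (p - 1)) =
      (LinearMap.range d1 ⊓ F0 p) ⊔ F0 (p - 1) :=
  sup_inf_inf_sup_eq_of_le (LinearMap.range_le_ker_iff.mpr hdd) (hF0 (Int.sub_le_self p zero_le_one))

/-- The key modular-law computation in the convergence theorem: with
`A^∞_p = ker ∂ ∩ F_pC`, one has
`(∂C + F_{p-1}C) ∩ (A^∞_p + F_{p-1}C) = (∂C ∩ F_pC) + F_{p-1}C`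
(fixed degree `n`; `C1`, `C0`, `Cm1` are the components in degrees `n+1`, `n`, `n-1`,
and `∂C = range(d1)` is the image of the differential landing in degree `n`). -/
theorem filtered_complex_effectiveness
    (D : Type*) [Ring D]
    (C1 C0 Cm1 : Type*) [AddCommGroup C1] [Module D C1]
    [AddCommGroup C0] [Module D C0] [AddCommGroup Cm1] [Module D Cm1]
    (d1 : C1 →ₗ[D] C0) (d0 : C0 →ₗ[D] Cm1)
    (hdd : d0 ∘ₗ d1 = 0)
    (F1 : ℤ → Submodule D C1) (F0 : ℤ → Submodule D C0) (Fm1 : ℤ → Submodule D Cm1)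
    (hF1 : Monotone F1) (hF0 : Monotone F0) (hFm1 : Monotone Fm1)
    (hd1 : ∀ p, (F1 p).map d1 ≤ F0 p) (hd0 : ∀ p, (F0 p).map d0 ≤ Fm1 p)
    (p : ℤ) :
    (LinearMap.range d1 ⊔ F0 (p - 1)) ⊓ ((LinearMap.ker d0 ⊓ F0 p) ⊔ F0 (p - 1)) =
      (LinearMap.range d1 ⊓ F0 p) ⊔ F0 (p - 1) :=
  filtered_complex_effectiveness_general D C1 C0 Cm1 d1 d0 hdd F0 hF0 p
end

section
/- Let D be a ring and M a nonzero finitely generated left D-module admitting a finite projective resolution by finitely generated projectives. Then there exists c ≥ 0 with Ext^c_D(M, D) ≠ 0. -/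
/-!
If every `Ext^c_D(M, D)` vanished, the `D`-dual `P₀* → P₁* → ⋯ → Pₙ* → 0` of a finite
resolution `P` of `M` by finitely generated projectives would be an exact bounded complex of
projective right modules which starts with an injection. Such a complex splits, so
`P₀* → P₁*` has a left inverse. Finitely generated projectives are reflexive, so dualizing once
more shows that `P₁ → P₀` is surjective, and `M = coker (P₁ → P₀)` is zero.
-/

open CategoryTheory Limits Function LinearMap

universe u

section Splitting

variable {A : Type*} [Ring A] {X Y Z : Type*} [AddCommGroup X] [Module A X]
  [AddCommGroup Y] [Module A Y] [AddCommGroup Z] [Module A Z]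

theorem LinearMap.exists_retraction_ker (g : Y →ₗ[A] Z) [Module.Projective A (range g)] :
    ∃ r : Y →ₗ[A] ker g, r ∘ₗ (ker g).subtype = .id := by
  obtain ⟨s, hs⟩ := g.rangeRestrict.exists_rightInverse_of_surjective g.range_rangeRestrict
  have hs' : ∀ z, g.rangeRestrict (s z) = z := fun z => congr($hs z)
  refine ⟨codRestrict _ (.id - s ∘ₗ g.rangeRestrict) fun y => ?_, ?_⟩
  · simpa [sub_eq_zero] using (congr_arg Subtype.val (hs' (g.rangeRestrict y))).symm
  · ext ⟨y, hy⟩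
    have : g.rangeRestrict y = 0 := Subtype.ext hy
    simp [this]

theorem Module.Projective.ker_of_range (g : Y →ₗ[A] Z) [Module.Projective A Y]
    [Module.Projective A (range g)] : Module.Projective A (ker g) :=
  let ⟨r, hr⟩ := g.exists_retraction_ker
  .of_split _ r hr

theorem LinearMap.exists_leftInverse_of_range_eq_ker (f : X →ₗ[A] Y) (g : Y →ₗ[A] Z)
    (hfg : range f = ker g) (hf : Injective f) [Module.Projective A (range g)] :
    ∃ r : Y →ₗ[A] X, r ∘ₗ f = .id := by
  obtain ⟨p, hp⟩ := g.exists_retraction_ker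
  let e : X ≃ₗ[A] ker g := (LinearEquiv.ofInjective f hf).trans (.ofEq _ _ hfg)
  refine ⟨e.symm ∘ₗ p, LinearMap.ext fun x => ?_⟩
  have : p (f x) = e x := congr($hp (e x))
  simp [this]

theorem exists_leftInverse_of_exact_of_bounded {Q : ℕ → Type*} [∀ i, AddCommGroup (Q i)]
    [∀ i, Module A (Q i)] [∀ i, Module.Projective A (Q i)] (δ : ∀ i, Q i →ₗ[A] Q (i + 1))
    (hexact : ∀ i, range (δ i) = ker (δ (i + 1))) (hinj : Injective (δ 0)) (n : ℕ)
    (hbdd : ∀ i, n < i → Subsingleton (Q i)) :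
    ∃ r : Q 1 →ₗ[A] Q 0, r ∘ₗ δ 0 = .id := by
  have hrange (i : ℕ) (h : Module.Projective A (ker (δ (i + 1)))) :
      Module.Projective A (range (δ i)) :=
    .of_equiv (LinearEquiv.ofEq _ _ (hexact i).symm)
  have hker (k i : ℕ) (hk : n < i + k) : Module.Projective A (ker (δ i)) := by
    induction k generalizing i with
    | zero =>
      have := hbdd i hk
      infer_instance
    | succ k ih =>
      have := hrange i (ih (i + 1) (by omega))
      exact .ker_of_range (δ i)
  have := hrange 1 (hker (n + 1) 2 (by omega))
  exact (δ 0).exists_leftInverse_of_range_eq_ker (δ 1) (hexact 0) hinj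

end Splitting

section Duality

variable {R : Type*} [Ring R] {M N : Type*} [AddCommGroup M] [Module R M]
  [AddCommGroup N] [Module R N]

instance Module.Free.mulOpposite_self : Module.Free Rᵐᵒᵖ R :=
  .of_equiv (MulOpposite.opLinearEquiv Rᵐᵒᵖ).symm

instance Module.Projective.mulOpposite_dual [Module.Finite R M] [Module.Projective R M] :
    Module.Projective Rᵐᵒᵖ (Module.Dual R M) := by
  obtain ⟨n, π, s, -, -, hπs⟩ := Module.Finite.exists_comp_eq_id_of_projective R M
  have : Module.Projective Rᵐᵒᵖ (Module.Dual R (Fin n → R)) :=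
    .of_equiv (LinearEquiv.piRing R R (Fin n) Rᵐᵒᵖ).symm
  refine .of_split (lcomp Rᵐᵒᵖ R π) (lcomp Rᵐᵒᵖ R s) ?_
  ext f x
  simp [← comp_apply π s, hπs]

theorem Module.exists_forall_dual_apply_eq_pi {ι : Type*} [Fintype ι] [DecidableEq ι]
    (φ : Module.Dual R (ι → R) →ₗ[Rᵐᵒᵖ] R) : ∃ x : ι → R, ∀ f, φ f = f x := by
  refine ⟨fun i => φ (proj i), fun f => ?_⟩
  have hf : f = ∑ i, MulOpposite.op (f fun j => if i = j then 1 else 0) • proj i := by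
    refine LinearMap.ext fun v => ?_
    simp [pi_apply_eq_sum_univ f v]
  conv_lhs => rw [hf]
  rw [map_sum, pi_apply_eq_sum_univ f]
  simp [MulOpposite.smul_eq_mul_unop]

theorem Module.exists_forall_dual_apply_eq [Module.Finite R M] [Module.Projective R M]
    (φ : Module.Dual R M →ₗ[Rᵐᵒᵖ] R) : ∃ x : M, ∀ f, φ f = f x := by
  obtain ⟨n, π, s, -, -, hπs⟩ := Module.Finite.exists_comp_eq_id_of_projective R M
  obtain ⟨y, hy⟩ := exists_forall_dual_apply_eq_pi (φ ∘ₗ lcomp Rᵐᵒᵖ R s)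
  refine ⟨π y, fun f => ?_⟩
  have hf : lcomp Rᵐᵒᵖ R s (f ∘ₗ π) = f := by
    rw [lcomp_apply', LinearMap.comp_assoc, hπs, LinearMap.comp_id]
  simpa [hf] using hy (f ∘ₗ π)

theorem LinearMap.surjective_of_leftInverse_lcomp [Module.Finite R M] [Module.Projective R M]
    [Module.Projective R N] (f : M →ₗ[R] N) (r : Module.Dual R M →ₗ[Rᵐᵒᵖ] Module.Dual R N)
    (hr : r ∘ₗ lcomp Rᵐᵒᵖ R f = .id) : Surjective f := by
  intro x
  -- `g ↦ r g x` is evaluation at some `y : M`; then `f y` and `x` agree under every functional.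
  obtain ⟨y, hy⟩ := Module.exists_forall_dual_apply_eq (applyₗ' Rᵐᵒᵖ x ∘ₗ r)
  refine ⟨y, sub_eq_zero.mp <| (Module.forall_dual_apply_eq_zero_iff R _).mp fun g => ?_⟩
  have hrg : r (lcomp Rᵐᵒᵖ R f g) = g := congr($hr g)
  have hgx : g x = g (f y) := by simpa [hrg] using hy (lcomp Rᵐᵒᵖ R f g)
  rw [map_sub, hgx, sub_self]

end Duality

namespace ChainComplex

section Yoneda

variable {C : Type*} [Category C] [Abelian C] {A : Type*} [Ring A] [Linear A C]
  (X : ChainComplex C ℕ) (Y : C)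

theorem linearYonedaObj_exactAt_succ_iff (i : ℕ) :
    (X.linearYonedaObj A Y).ExactAt (i + 1) ↔ ∀ g : X.X (i + 1) ⟶ Y,
      X.d (i + 2) (i + 1) ≫ g = 0 → ∃ f : X.X i ⟶ Y, X.d (i + 1) i ≫ f = g := by
  rw [HomologicalComplex.exactAt_iff' _ i (i + 1) (i + 2) (by simp) (by simp),
    ShortComplex.moduleCat_exact_iff]
  rfl

theorem linearYonedaObj_exactAt_zero_iff :
    (X.linearYonedaObj A Y).ExactAt 0 ↔ ∀ f : X.X 0 ⟶ Y, X.d 1 0 ≫ f = 0 → f = 0 := by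
  rw [HomologicalComplex.exactAt_iff' _ 0 0 1 (by simp) (by simp),
    ShortComplex.moduleCat_exact_iff]
  change (∀ f : X.X 0 ⟶ Y, X.d 1 0 ≫ f = 0 → ∃ g, (X.linearYonedaObj A Y).d 0 0 g = f) ↔ _
  simp only [ComplexShape.up_Rel, zero_add, one_ne_zero, not_false_eq_true,
    HomologicalComplex.shape, ModuleCat.hom_zero, LinearMap.zero_apply, exists_const]
  exact forall₂_congr fun _ _ => eq_comm

end Yoneda

section ModuleCat

variable {R : Type u} [Ring R] (C : ChainComplex (ModuleCat.{u} R) ℕ)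

theorem range_lcomp_d_eq_ker_of_exactAt (i : ℕ)
    (h : (C.linearYonedaObj ℤ (ModuleCat.of R R)).ExactAt (i + 1)) :
    range (lcomp Rᵐᵒᵖ R (C.d (i + 1) i).hom) =
      ker (lcomp Rᵐᵒᵖ R (C.d (i + 2) (i + 1)).hom) := by
  refine le_antisymm ?_ fun g hg => ?_
  · rintro _ ⟨f, rfl⟩
    ext x
    simp [← ModuleCat.comp_apply]
  · obtain ⟨f, hf⟩ := (C.linearYonedaObj_exactAt_succ_iff _ i).mp h (ModuleCat.ofHom g)
      (by ext x; exact congr($hg x))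
    exact ⟨f.hom, by ext x; exact congr($hf x)⟩

theorem injective_lcomp_d_of_exactAt_zero
    (h : (C.linearYonedaObj ℤ (ModuleCat.of R R)).ExactAt 0) :
    Injective (lcomp Rᵐᵒᵖ R (C.d 1 0).hom) := by
  refine (injective_iff_map_eq_zero _).mpr fun f hf => ?_
  have := (C.linearYonedaObj_exactAt_zero_iff _).mp h (ModuleCat.ofHom f)
    (by ext x; exact congr($hf x))
  exact congr(ModuleCat.Hom.hom $this)

theorem surjective_d_one_zero_of_exactAt_linearYonedaObj [∀ i, Module.Finite R (C.X i)]
    [∀ i, Module.Projective R (C.X i)] (n : ℕ) (hbdd : ∀ i, n < i → Subsingleton (C.X i))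
    (hexact : ∀ i, (C.linearYonedaObj ℤ (ModuleCat.of R R)).ExactAt i) :
    Surjective (C.d 1 0) := by
  obtain ⟨r, hr⟩ :=
    exists_leftInverse_of_exact_of_bounded (Q := fun i => Module.Dual R (C.X i))
      (fun i => lcomp Rᵐᵒᵖ R (C.d (i + 1) i).hom)
      (fun i => C.range_lcomp_d_eq_ker_of_exactAt i (hexact (i + 1)))
      (C.injective_lcomp_d_of_exactAt_zero (hexact 0)) n
      (fun i hi => have := hbdd i hi; show Subsingleton (Module.Dual R (C.X i)) from inferInstance)
  exact (C.d 1 0).hom.surjective_of_leftInverse_lcomp r hr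

end ModuleCat

end ChainComplex

theorem CategoryTheory.ProjectiveResolution.isZero_of_epi_d_one_zero {C : Type*} [Category C]
    [Abelian C] {Z : C} (P : ProjectiveResolution Z) [Epi (P.complex.d 1 0)] : IsZero Z :=
  (IsZero.of_epi_eq_zero _ (zero_of_epi_comp _ P.complex_d_comp_π_f_zero)).of_iso
    (HomologicalComplex.singleObjXSelf _ 0 Z).symm

theorem exists_ext_ne_zero_general
    (D : Type) [Ring D] (M : Type) [AddCommGroup M] [Module D M]
    (hM : Nontrivial M)
    (hres : ∃ (n : ℕ) (P : ProjectiveResolution (ModuleCat.of D M)),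
      (∀ i : ℕ, Module.Finite D (P.complex.X i)) ∧
      ∀ i : ℕ, n < i → Subsingleton (P.complex.X i)) :
    ∃ c : ℕ,
      Nontrivial
        (((Ext ℤ (ModuleCat D) c).obj (Opposite.op (ModuleCat.of D M))).obj
          (ModuleCat.of D D)) := by
  obtain ⟨n, P, hfin, hbdd⟩ := hres
  by_contra! hvanish
  have hexact (c : ℕ) : (P.complex.linearYonedaObj ℤ (ModuleCat.of D D)).ExactAt c := by
    have := hvanish c
    rw [HomologicalComplex.exactAt_iff_isZero_homology]
    exact (ModuleCat.isZero_of_subsingleton _).of_iso (P.isoExt c _).symm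
  have (i : ℕ) : Module.Projective D (P.complex.X i) :=
    (IsProjective.iff_projective _).mpr (P.projective i)
  have := (ModuleCat.epi_iff_surjective _).mpr
    (P.complex.surjective_d_one_zero_of_exactAt_linearYonedaObj n hbdd hexact)
  exact not_subsingleton M (ModuleCat.subsingleton_of_isZero P.isZero_of_epi_d_one_zero)

/-- If `M` is a nonzero finitely generated left `D`-module admitting a finite projective
resolution by finitely generated projectives, then `Ext^c_D(M, D) ≠ 0` for some `c ≥ 0`. -/
theorem exists_ext_ne_zero
    (D : Type) [Ring D] (M : Type) [AddCommGroup M] [Module D M]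
    [Module.Finite D M] (hM : Nontrivial M)
    (hres : ∃ (n : ℕ) (P : ProjectiveResolution (ModuleCat.of D M)),
      (∀ i : ℕ, Module.Finite D (P.complex.X i)) ∧
      ∀ i : ℕ, n < i → Subsingleton (P.complex.X i)) :
    ∃ c : ℕ,
      Nontrivial
        (((Ext ℤ (ModuleCat D) c).obj (Opposite.op (ModuleCat.of D M))).obj
          (ModuleCat.of D D)) :=
  exists_ext_ne_zero_general D M hM hres
end
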